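/- arXiv:1611.07306 — 4 statements merged into one kernel-verified Lean document; each statement's English description precedes it below -/
import Mathlib

section
/- (Macaulay's basis theorem) Let K be a field, σ a monomial order on P = K[x₁,…,xₙ], and I ⊆ P an ideal. Then the residue classes in P/I of the monomials X^a that do not belong to the leading-term ideal LT_σ(I) form a basis of P/I as a K-vector space. -/
open MvPolynomial

/-- A monomial order on the exponent vectors `ν →₀ ℕ`: a linear order compatible with
addition and having `0` as least element. -/
structure MonomialOrd (ν : Type) where
  le : (ν →₀ ℕ) → (ν →₀ ℕ) → Prop
  le_refl : ∀ a, le a a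
  le_trans : ∀ a b c, le a b → le b c → le a c
  le_antisymm : ∀ a b, le a b → le b a → a = b
  le_total : ∀ a b, le a b ∨ le b a
  add_le_add : ∀ a b c, le a b → le (a + c) (b + c)
  zero_le : ∀ a, le 0 a

/-- `a` is the σ-largest exponent vector in the support of `f`
(so `X^a` is the σ-leading monomial of `f`). -/
def IsLeadingExp {K : Type} [Field K] {ν : Type} (σ : MonomialOrd ν)
    (f : MvPolynomial ν K) (a : ν →₀ ℕ) : Prop :=
  a ∈ f.support ∧ ∀ b ∈ f.support, σ.le b a

/-- The leading-term ideal `LT_σ(I)`: the ideal generated by the σ-leading monomials of the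
nonzero elements of `I`. -/
noncomputable def ltIdeal {K : Type} [Field K] {ν : Type} (σ : MonomialOrd ν)
    (I : Ideal (MvPolynomial ν K)) : Ideal (MvPolynomial ν K) :=
  Ideal.span { m | ∃ f ∈ I, ∃ a, IsLeadingExp σ f a ∧ m = monomial a (1 : K) }

/-- `G` is a σ-Gröbner basis of `I`: a finite subset of `I` whose σ-leading monomials
generate `LT_σ(I)`. -/
def IsGroebnerBasis {K : Type} [Field K] {ν : Type} (σ : MonomialOrd ν)
    (I : Ideal (MvPolynomial ν K)) (G : Finset (MvPolynomial ν K)) : Prop :=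
  ↑G ⊆ (I : Set (MvPolynomial ν K)) ∧
    Ideal.span { m | ∃ g ∈ G, ∃ a, IsLeadingExp σ g a ∧ m = monomial a (1 : K) } = ltIdeal σ I

/-!
Transport `σ` to a Mathlib `MonomialOrder`; it is well founded by Dickson's lemma. A monomial
`X^a` lies in the monomial ideal `LT_σ(I)` iff `a` is divisible by the leading exponent of a
nonzero element of `I`; call the other exponents standard. The polynomials supported on standard
exponents form a vector-space complement of `I` in `P`: a nonzero element of `I` has a
non-standard leading exponent, and dividing any `f` by all nonzero elements of `I` leaves a
remainder supported on standard exponents. A complement of the kernel of `P → P/I` maps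
isomorphically onto `P/I`, and it carries the monomial basis to the residue classes.
-/

section MonomialOrder

variable {ν R K : Type*} [CommSemiring R] [Field K] (m : MonomialOrder ν)

def MonomialOrder.standardExponents (I : Ideal (MvPolynomial ν R)) : Set (ν →₀ ℕ) :=
  {a | ∀ f ∈ I, f ≠ 0 → ¬ m.degree f ≤ a}

theorem MonomialOrder.disjoint_restrictSupport_standardExponents
    (I : Ideal (MvPolynomial ν R)) :
    Disjoint (restrictSupport R (m.standardExponents I)) (I.restrictScalars R) := by
  rw [Submodule.disjoint_def]
  intro f hstd hI
  by_contra hf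
  exact hstd (m.degree_mem_support hf) f hI hf le_rfl

theorem MonomialOrder.codisjoint_restrictSupport_standardExponents
    (I : Ideal (MvPolynomial ν K)) :
    Codisjoint (restrictSupport K (m.standardExponents I)) (I.restrictScalars K) := by
  rw [Submodule.codisjoint_iff_exists_add_eq]
  intro f
  let B : Set (MvPolynomial ν K) := {b | b ∈ I ∧ b ≠ 0}
  obtain ⟨g, r, hf, -, hr⟩ :=
    m.div_set (B := B) (fun b hb => (m.leadingCoeff_ne_zero_iff.mpr hb.2).isUnit) f
  have hgI : Finsupp.linearCombination _ (fun b : B => (b : MvPolynomial ν K)) g ∈ I := by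
    rw [Finsupp.linearCombination_apply]
    exact Submodule.sum_mem _ fun b _ => I.smul_mem _ b.2.1
  exact ⟨r, _, fun c hc b hbI hb => hr c hc b ⟨hbI, hb⟩, hgI, by rw [hf, add_comm]⟩

theorem MonomialOrder.isCompl_restrictSupport_standardExponents
    (I : Ideal (MvPolynomial ν K)) :
    IsCompl (restrictSupport K (m.standardExponents I)) (I.restrictScalars K) :=
  ⟨m.disjoint_restrictSupport_standardExponents I,
    m.codisjoint_restrictSupport_standardExponents I⟩

end MonomialOrder

namespace MonomialOrd

variable {ν : Type} (σ : MonomialOrd ν)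

/-- `ν →₀ ℕ` with the order `σ`, through which `σ` becomes a Mathlib `MonomialOrder`. -/
def Syn (_ : MonomialOrd ν) : Type := ν →₀ ℕ

noncomputable instance : LinearOrder σ.Syn where
  le := σ.le
  le_refl := σ.le_refl
  le_trans := σ.le_trans
  le_antisymm := σ.le_antisymm
  le_total := σ.le_total
  toDecidableLE := Classical.decRel _

noncomputable instance : AddCommMonoid σ.Syn := inferInstanceAs (AddCommMonoid (ν →₀ ℕ))

instance : IsOrderedAddMonoid σ.Syn where
  add_le_add_left a b h c := σ.add_le_add a b c h

theorem le_of_le {a b : ν →₀ ℕ} (h : a ≤ b) : σ.le a b := by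
  obtain ⟨c, rfl⟩ := le_iff_exists_add.mp h
  simpa [add_comm] using σ.add_le_add 0 c a (σ.zero_le c)

/-- Dickson's lemma: a strictly `σ`-decreasing sequence would contain `a i ≤ a j` for some
`i < j`, contradicting `σ.le_of_le`. -/
instance [Finite ν] : WellFoundedLT σ.Syn := by
  rw [WellFoundedLT, isWellFounded_iff, RelEmbedding.wellFounded_iff_isEmpty]
  refine ⟨fun f ↦ ?_⟩
  obtain ⟨i, j, hij, hle⟩ := wellQuasiOrdered_le (α := ν →₀ ℕ) f
  exact (f.map_rel_iff.2 hij).not_ge (σ.le_of_le hle)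

noncomputable def toMonomialOrder [Finite ν] : MonomialOrder ν where
  syn := σ.Syn
  toSyn := AddEquiv.refl _
  toSyn_monotone _ _ := σ.le_of_le

variable [Finite ν] {K : Type} [Field K]

theorem isLeadingExp_iff {f : MvPolynomial ν K} {a : ν →₀ ℕ} :
    IsLeadingExp σ f a ↔ f ≠ 0 ∧ σ.toMonomialOrder.degree f = a := by
  constructor
  · rintro ⟨ha, hmax⟩
    have hf : f ≠ 0 := by rintro rfl; simp at ha
    exact ⟨hf, σ.le_antisymm _ _ (hmax _ (σ.toMonomialOrder.degree_mem_support hf))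
      (σ.toMonomialOrder.le_degree ha)⟩
  · rintro ⟨hf, rfl⟩
    exact ⟨σ.toMonomialOrder.degree_mem_support hf, fun b hb => σ.toMonomialOrder.le_degree hb⟩

theorem monomial_mem_ltIdeal_iff {I : Ideal (MvPolynomial ν K)} {a : ν →₀ ℕ} :
    monomial a (1 : K) ∈ ltIdeal σ I ↔ ∃ f ∈ I, f ≠ 0 ∧ σ.toMonomialOrder.degree f ≤ a := by
  have hspan : ltIdeal σ I =
      Ideal.span ((fun a => monomial a (1 : K)) '' {a | ∃ f ∈ I, IsLeadingExp σ f a}) := by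
    unfold ltIdeal
    congr 1
    ext
    simp only [Set.mem_image, Set.mem_ofPred_eq]
    exact ⟨fun ⟨f, hf, a, ha, e⟩ => ⟨a, ⟨f, hf, ha⟩, e.symm⟩,
      fun ⟨a, ⟨f, hf, ha⟩, e⟩ => ⟨f, hf, a, ha, e.symm⟩⟩
  classical
  rw [hspan, mem_ideal_span_monomial_image, support_monomial, if_neg one_ne_zero]
  simp [σ.isLeadingExp_iff, and_assoc]

theorem setOf_monomial_notMem_ltIdeal (I : Ideal (MvPolynomial ν K)) :
    {a | monomial a (1 : K) ∉ ltIdeal σ I} = σ.toMonomialOrder.standardExponents I := by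
  ext a
  simp [σ.monomial_mem_ltIdeal_iff, MonomialOrder.standardExponents]

end MonomialOrd

/-- Macaulay's basis theorem: the residue classes of the monomials not in
`LT_σ(I)` form a `K`-vector-space basis of `P/I`. -/
theorem macaulay_basis_theorem {K : Type} [Field K] {n : ℕ}
    (σ : MonomialOrd (Fin n)) (I : Ideal (MvPolynomial (Fin n) K)) :
    LinearIndependent K
      (fun a : {a : Fin n →₀ ℕ // monomial a (1 : K) ∉ ltIdeal σ I} =>
        Ideal.Quotient.mk I (monomial a.1 (1 : K))) ∧
    Submodule.span K
      (Set.range (fun a : {a : Fin n →₀ ℕ // monomial a (1 : K) ∉ ltIdeal σ I} =>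
        Ideal.Quotient.mk I (monomial a.1 (1 : K)))) = ⊤ := by
  let v (a : {a : Fin n →₀ ℕ // monomial a (1 : K) ∉ ltIdeal σ I}) := monomial a.1 (1 : K)
  let π := (Ideal.Quotient.mkₐ K I).toLinearMap
  have hspan : Submodule.span K (Set.range v) =
      restrictSupport K (σ.toMonomialOrder.standardExponents I) := by
    rw [restrictSupport_eq_span, ← σ.setOf_monomial_notMem_ltIdeal, Set.image_eq_range]
    rfl
  have hker : LinearMap.ker π = I.restrictScalars K := by
    ext
    simp [π, Ideal.Quotient.eq_zero_iff_mem]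
  have hcompl : IsCompl (Submodule.span K (Set.range v)) (LinearMap.ker π) := by
    rw [hspan, hker]
    exact σ.toMonomialOrder.isCompl_restrictSupport_standardExponents I
  have hv : LinearIndependent K v :=
    (basisMonomials (Fin n) K).linearIndependent.comp Subtype.val Subtype.val_injective
  refine ⟨hv.map hcompl.disjoint, ?_⟩
  change Submodule.span K (Set.range (π ∘ v)) = ⊤
  rw [Set.range_comp, Submodule.span_image, Submodule.map_eq_range_iff.mpr hcompl.codisjoint,
    LinearMap.range_eq_top]
  exact Ideal.Quotient.mk_surjective
end

section
/- Let K be a field, σ a monomial order on P = K[x₁,…,xₙ], and I ⊆ P an ideal that is homogeneous with respect to the standard grading by total degree. Then P/I and P/LT_σ(I) have the same Hilbert function: for every d ≥ 0, the K-vector space dimension of P_d/I_d equals the dimension of P_d/(LT_σ(I))_d, where P_d is the space of homogeneous polynomials of total degree d, I_d = I ∩ P_d, and (LT_σ(I))_d = LT_σ(I) ∩ P_d. -/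
/-!
For a space `V` of polynomials, elements of `V` with pairwise distinct σ-leading exponents are
linearly independent, and an element of `V` whose coefficients vanish at all leading exponents
of `V` is zero (else its own leading exponent is one of them). Hence `dim V` is the number of
leading exponents of elements of `V`.

For homogeneous `I`, the spaces `I_d` and `LT_σ(I)_d` have the same leading exponents: if `a` is
in the support of an element of `LT_σ(I)`, then `a₀ ≤ a` for the leading exponent `a₀` of some
`f ∈ I`, and `X^(a - a₀)` times the component of `f` of degree `|a₀|` lies in `I_d` and has
leading exponent `a`. So `dim I_d = dim LT_σ(I)_d`, and the quotients of `P_d` have equal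
dimension.
-/

open MvPolynomial

namespace MonomialOrd

variable {ν : Type} (σ : MonomialOrd ν)

theorem exists_max {s : Finset (ν →₀ ℕ)} (hs : s.Nonempty) : ∃ a ∈ s, ∀ b ∈ s, σ.le b a := by
  induction hs using Finset.Nonempty.cons_induction with
  | singleton a => exact ⟨a, Finset.mem_singleton_self a, by simp [σ.le_refl]⟩
  | cons x s hx hs ih =>
    obtain ⟨a, ha, hmax⟩ := ih
    rcases σ.le_total x a with hxa | hax
    · exact ⟨a, Finset.mem_cons_of_mem ha, (Finset.forall_mem_cons hx _).mpr ⟨hxa, hmax⟩⟩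
    · exact ⟨x, Finset.mem_cons_self x s, (Finset.forall_mem_cons hx _).mpr
        ⟨σ.le_refl x, fun b hb => σ.le_trans _ _ _ (hmax b hb) hax⟩⟩

end MonomialOrd

section LeadingExp

variable {K : Type} [Field K] {ν : Type} {σ : MonomialOrd ν}

variable (σ) in
theorem exists_isLeadingExp {f : MvPolynomial ν K} (hf : f ≠ 0) :
    ∃ a, IsLeadingExp σ f a :=
  σ.exists_max (support_nonempty.mpr hf)

theorem isLeadingExp_monomial (a : ν →₀ ℕ) {c : K} (hc : c ≠ 0) :
    IsLeadingExp σ (monomial a c) a := by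
  classical
  rw [IsLeadingExp, support_monomial, if_neg hc]
  simp [σ.le_refl]

namespace IsLeadingExp

variable {f : MvPolynomial ν K} {a : ν →₀ ℕ}

theorem coeff_ne_zero (h : IsLeadingExp σ f a) : coeff a f ≠ 0 :=
  mem_support_iff.mp h.1

theorem coeff_eq_zero_of_le (h : IsLeadingExp σ f a) {b : ν →₀ ℕ} (hab : σ.le a b)
    (hba : b ≠ a) : coeff b f = 0 :=
  notMem_support_iff.mp fun hb => hba (σ.le_antisymm _ _ (h.2 b hb) hab)

theorem monomial_one_mul (h : IsLeadingExp σ f a) (b : ν →₀ ℕ) :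
    IsLeadingExp σ (monomial b 1 * f) (b + a) := by
  refine ⟨by rw [mem_support_iff, coeff_monomial_mul, one_mul]; exact h.coeff_ne_zero,
    fun m hm => ?_⟩
  rw [mem_support_iff, coeff_monomial_mul'] at hm
  split_ifs at hm with hbm
  · have := σ.add_le_add _ _ b (h.2 _ (mem_support_iff.mpr (by simpa using hm)))
    rwa [tsub_add_cancel_of_le hbm, add_comm a b] at this
  · exact absurd rfl hm

theorem homogeneousComponent (h : IsLeadingExp σ f a) :
    IsLeadingExp σ (homogeneousComponent a.degree f) a := by
  rw [IsLeadingExp, support_homogeneousComponent]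
  exact ⟨Finset.mem_filter.mpr ⟨h.1, rfl⟩, fun b hb => h.2 b (Finset.mem_filter.mp hb).1⟩

end IsLeadingExp

theorem linearIndependent_of_isLeadingExp {ι : Type*} {g : ι → MvPolynomial ν K}
    {e : ι → ν →₀ ℕ} (he : Function.Injective e) (hg : ∀ i, IsLeadingExp σ (g i) (e i)) :
    LinearIndependent K g := by
  classical
  rw [linearIndependent_iff']
  intro s c hc i hi
  by_contra hci
  -- compare coefficients at the largest leading exponent occurring with a nonzero coefficient
  obtain ⟨_, hjt, hmax⟩ := σ.exists_max (s := (s.filter (c · ≠ 0)).image e)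
    ⟨e i, Finset.mem_image_of_mem e (Finset.mem_filter.mpr ⟨hi, hci⟩)⟩
  obtain ⟨j, hj, rfl⟩ := Finset.mem_image.mp hjt
  rw [Finset.mem_filter] at hj
  have hcoeff : coeff (e j) (∑ k ∈ s, c k • g k) = c j * coeff (e j) (g j) := by
    rw [coeff_sum, Finset.sum_eq_single_of_mem j hj.1 fun k hk hkj => ?_, coeff_smul, smul_eq_mul]
    by_cases hck : c k = 0
    · simp [hck]
    rw [coeff_smul, (hg k).coeff_eq_zero_of_le (hmax _ (Finset.mem_image_of_mem e
      (Finset.mem_filter.mpr ⟨hk, hck⟩))) (he.ne hkj).symm, smul_zero]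
  rw [hc, coeff_zero] at hcoeff
  exact mul_ne_zero hj.2 (hg j).coeff_ne_zero hcoeff.symm

variable (σ) in
def leadingExps (V : Submodule K (MvPolynomial ν K)) : Set (ν →₀ ℕ) :=
  {a | ∃ f ∈ V, IsLeadingExp σ f a}

theorem eq_zero_of_coeff_leadingExps_eq_zero {V : Submodule K (MvPolynomial ν K)}
    {f : MvPolynomial ν K} (hf : f ∈ V) (h : ∀ a ∈ leadingExps σ V, coeff a f = 0) : f = 0 := by
  by_contra hf0
  obtain ⟨a, ha⟩ := exists_isLeadingExp σ hf0
  exact ha.coeff_ne_zero (h a ⟨f, hf, ha⟩)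

variable (σ) in
/-- When `V` is infinite-dimensional, both sides are `0`. -/
theorem finrank_eq_card_leadingExps (V : Submodule K (MvPolynomial ν K)) :
    Module.finrank K V = Nat.card (leadingExps σ V) := by
  set S := leadingExps σ V
  choose g hgV hg using fun a : S => a.2
  have hli : LinearIndependent K fun a : S => (⟨g a, hgV a⟩ : V) :=
    .of_comp V.subtype (linearIndependent_of_isLeadingExp Subtype.val_injective hg)
  let φ : V →ₗ[K] S → K := LinearMap.pi fun a => lcoeff K a.1 ∘ₗ V.subtype
  have hφ : Function.Injective φ := by
    refine (injective_iff_map_eq_zero φ).mpr fun f hf => Subtype.ext ?_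
    exact eq_zero_of_coeff_leadingExps_eq_zero f.2 fun a ha => congr_fun hf ⟨a, ha⟩
  by_cases hV : Module.Finite K V
  · have : Finite S := hli.finite
    have := Fintype.ofFinite S
    refine le_antisymm ?_ (Nat.card_eq_fintype_card (α := S) ▸ hli.fintype_card_le_finrank)
    simpa using φ.finrank_le_finrank_of_injective hφ
  · have : Infinite S := not_finite_iff_infinite.mp fun _ => hV (.of_injective φ hφ)
    rw [Module.finrank_of_not_finite hV, Nat.card_eq_zero_of_infinite]

end LeadingExp

theorem Submodule.finrank_quotient_comap_subtype {K V : Type*} [DivisionRing K] [AddCommGroup V]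
    [Module K V] (W M : Submodule K V) [Module.Finite K M] :
    Module.finrank K (M ⧸ W.comap M.subtype) =
      Module.finrank K M - Module.finrank K (W ⊓ M : Submodule K V) := by
  have hW : Module.finrank K (W.comap M.subtype) = Module.finrank K (W ⊓ M : Submodule K V) := by
    rw [← Submodule.finrank_map_subtype_eq, Submodule.map_comap_subtype, inf_comm]
  rw [← hW, ← (W.comap M.subtype).finrank_quotient_add_finrank, Nat.add_sub_cancel]

section LeadingTermIdeal

variable {K : Type} [Field K] {ν : Type} {σ : MonomialOrd ν} {I : Ideal (MvPolynomial ν K)}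

variable (σ I) in
theorem ltIdeal_eq_span_leadingExps :
    ltIdeal σ I =
      Ideal.span ((fun a => monomial a (1 : K)) '' leadingExps σ (I.restrictScalars K)) := by
  unfold ltIdeal leadingExps
  congr 1
  ext m
  simp only [Set.mem_image, Submodule.restrictScalars_mem]
  constructor
  · rintro ⟨f, hf, a, ha, rfl⟩
    exact ⟨a, ⟨f, hf, ha⟩, rfl⟩
  · rintro ⟨a, ⟨f, hf, ha⟩, rfl⟩
    exact ⟨f, hf, a, ha, rfl⟩

theorem exists_isLeadingExp_le_of_mem_ltIdeal {f : MvPolynomial ν K} (hf : f ∈ ltIdeal σ I)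
    {a : ν →₀ ℕ} (ha : a ∈ f.support) : ∃ a₀ ≤ a, ∃ f₀ ∈ I, IsLeadingExp σ f₀ a₀ := by
  rw [ltIdeal_eq_span_leadingExps, mem_ideal_span_monomial_image] at hf
  obtain ⟨a₀, ⟨f₀, hf₀, ha₀⟩, hle⟩ := hf a ha
  exact ⟨a₀, hle, f₀, hf₀, ha₀⟩

theorem exists_isHomogeneous_isLeadingExp
    (hI : ∀ f ∈ I, ∀ d : ℕ, homogeneousComponent d f ∈ I) {f₀ : MvPolynomial ν K}
    (hf₀ : f₀ ∈ I) {a₀ a : ν →₀ ℕ} (ha₀ : IsLeadingExp σ f₀ a₀) (hle : a₀ ≤ a) :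
    ∃ f ∈ I, f.IsHomogeneous a.degree ∧ IsLeadingExp σ f a := by
  have hdeg : (a - a₀).degree + a₀.degree = a.degree := by
    rw [← map_add, tsub_add_cancel_of_le hle]
  refine ⟨monomial (a - a₀) 1 * homogeneousComponent a₀.degree f₀,
    I.mul_mem_left _ (hI f₀ hf₀ _), ?_, ?_⟩
  · exact hdeg ▸ (isHomogeneous_monomial _ rfl).mul (homogeneousComponent_isHomogeneous _ _)
  · simpa only [tsub_add_cancel_of_le hle] using ha₀.homogeneousComponent.monomial_one_mul (a - a₀)

theorem leadingExps_ltIdeal_inf_homogeneousSubmodule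
    (hI : ∀ f ∈ I, ∀ d : ℕ, homogeneousComponent d f ∈ I) (d : ℕ) :
    leadingExps σ ((ltIdeal σ I).restrictScalars K ⊓ homogeneousSubmodule ν K d) =
      leadingExps σ (I.restrictScalars K ⊓ homogeneousSubmodule ν K d) := by
  ext a
  constructor
  · rintro ⟨f, ⟨hfI, hfd⟩, ha⟩
    obtain ⟨a₀, hle, f₀, hf₀, ha₀⟩ := exists_isLeadingExp_le_of_mem_ltIdeal hfI ha.1
    obtain ⟨g, hgI, hgd, hga⟩ := exists_isHomogeneous_isLeadingExp hI hf₀ ha₀ hle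
    have hd : a.degree = d := (hfd.degree_eq_sum_deg_support ha.1).symm
    exact ⟨g, ⟨hgI, hd ▸ hgd⟩, hga⟩
  · rintro ⟨f, ⟨hfI, hfd⟩, ha⟩
    exact ⟨monomial a 1, ⟨Ideal.subset_span ⟨f, hfI, a, ha, rfl⟩,
      isHomogeneous_monomial _ (hfd.degree_eq_sum_deg_support ha.1).symm⟩,
      isLeadingExp_monomial a one_ne_zero⟩

end LeadingTermIdeal

/-- for a homogeneous ideal `I` (w.r.t. the standard grading by total degree),
`P/I` and `P/LT_σ(I)` have the same Hilbert function. -/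
theorem hilbert_function_of_leading_term_ideal {K : Type} [Field K] {n : ℕ}
    (σ : MonomialOrd (Fin n)) (I : Ideal (MvPolynomial (Fin n) K))
    (hI : ∀ f ∈ I, ∀ d : ℕ, MvPolynomial.homogeneousComponent d f ∈ I) :
    ∀ d : ℕ,
      Module.finrank K
        (↥(MvPolynomial.homogeneousSubmodule (Fin n) K d) ⧸
          Submodule.comap (MvPolynomial.homogeneousSubmodule (Fin n) K d).subtype
            (Submodule.restrictScalars K I)) =
      Module.finrank K
        (↥(MvPolynomial.homogeneousSubmodule (Fin n) K d) ⧸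
          Submodule.comap (MvPolynomial.homogeneousSubmodule (Fin n) K d).subtype
            (Submodule.restrictScalars K (ltIdeal σ I))) := by
  intro d
  have : Module.Finite K (homogeneousSubmodule (Fin n) K d) :=
    Module.Finite.iff_fg.mpr (homogeneousSubmodule_fg _ _ d)
  rw [Submodule.finrank_quotient_comap_subtype, Submodule.finrank_quotient_comap_subtype,
    finrank_eq_card_leadingExps σ (_ ⊓ _), finrank_eq_card_leadingExps σ (_ ⊓ _),
    leadingExps_ltIdeal_inf_homogeneousSubmodule hI]
end

section
/- Let K be a field, let a₁,…,aₙ ∈ ℕ^s be exponent vectors, and let φ : K[x₁,…,xₙ] → K[t₁,…,tₛ] be the K-algebra homomorphism sending xᵢ to the monomial t^{aᵢ}. Then the kernel of φ (the toric ideal of a₁,…,aₙ) is a prime ideal, and it is generated by binomials: ker φ equals the ideal generated by { X^u − X^v : u, v ∈ ℕⁿ with Σᵢ uᵢ aᵢ = Σᵢ vᵢ aᵢ }. -/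
/-!
The toric map is `mapDomain` along the additive map `u ↦ ∑ uᵢ aᵢ`, and its kernel is prime
because the target is a domain. For the binomials, let `g` send each exponent `u` to a fixed
representative of its fibre. Every `p` satisfies `p - g_* p ∈ span {X^u - X^{g u}}`, and
`g_* p = 0` whenever `p` is in the kernel, because `g` factors through `u ↦ ∑ uᵢ aᵢ`.
-/

open MvPolynomial

namespace AddMonoidAlgebra

variable {R M N O : Type*}

lemma mapDomain_comp [Semiring R] (f : M → N) (g : N → O) (x : R[M]) :
    mapDomain (g ∘ f) x = mapDomain g (mapDomain f x) := by
  ext; simp [Finsupp.mapDomain_comp]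

lemma sub_mapDomain_mem_span_binomials [Ring R] (g : M → M) (x : R[M]) :
    x - mapDomain g x ∈
      Submodule.span R {y : R[M] | ∃ u, y = single u 1 - single (g u) 1} := by
  induction x using induction_linear with
  | zero => simp
  | add x y hx hy =>
    rw [mapDomain_add, add_sub_add_comm]
    exact add_mem hx hy
  | single u r =>
    have hsingle : single u r - mapDomain g (single u r) = r • (single u 1 - single (g u) 1) := by
      simp [smul_sub]
    rw [hsingle]
    exact Submodule.smul_mem _ r (Submodule.subset_span ⟨u, rfl⟩)

theorem ker_mapDomainAlgHom [CommRing R] [AddMonoid M] [AddMonoid N] (f : M →+ N) :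
    RingHom.ker (mapDomainAlgHom R R f) =
      Ideal.span {x : R[M] | ∃ u v, f u = f v ∧ x = single u 1 - single v 1} := by
  apply le_antisymm
  · intro x hx
    rw [RingHom.mem_ker, mapDomainAlgHom_apply] at hx
    set g := Function.invFun f ∘ f
    have hfg (u : M) : f (g u) = f u := Function.invFun_eq ⟨u, rfl⟩
    have hspan := sub_mapDomain_mem_span_binomials g x
    rw [mapDomain_comp, hx, mapDomain_zero, sub_zero] at hspan
    refine Submodule.span_le_restrictScalars R R[M] _ (Submodule.span_mono ?_ hspan)
    rintro _ ⟨u, rfl⟩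
    exact ⟨u, g u, (hfg u).symm, rfl⟩
  · rw [Ideal.span_le]
    rintro _ ⟨u, v, huv, rfl⟩
    rw [SetLike.mem_coe, RingHom.mem_ker, map_sub, mapDomainAlgHom_apply, mapDomainAlgHom_apply,
      mapDomain_single, mapDomain_single, huv, sub_self]

end AddMonoidAlgebra

namespace MvPolynomial

theorem aeval_monomial_one_eq_mapDomainAlgHom {R σ τ : Type*} [CommSemiring R]
    (a : σ → τ →₀ ℕ) :
    aeval (fun i => monomial (a i) (1 : R)) =
      AddMonoidAlgebra.mapDomainAlgHom R R (Finsupp.linearCombination ℕ a).toAddMonoidHom := by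
  refine algHom_ext fun i => ?_
  rw [aeval_X, AddMonoidAlgebra.mapDomainAlgHom_apply, X, ← single_eq_monomial,
    ← single_eq_monomial, AddMonoidAlgebra.mapDomain_single]
  simp

end MvPolynomial

/-- the toric ideal of `a₁,…,aₙ ∈ ℕˢ`, i.e. the kernel of the `K`-algebra map
`K[x₁,…,xₙ] → K[t₁,…,tₛ]`, `xᵢ ↦ t^{aᵢ}`, is prime and is generated by the binomials
`X^u − X^v` with `Σ uᵢ aᵢ = Σ vᵢ aᵢ`. -/
theorem toric_ideal_prime_and_binomial {K : Type} [Field K] {s n : ℕ}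
    (a : Fin n → (Fin s →₀ ℕ))
    (φ : MvPolynomial (Fin n) K →ₐ[K] MvPolynomial (Fin s) K)
    (hφ : φ = MvPolynomial.aeval (fun i => monomial (a i) (1 : K))) :
    (RingHom.ker φ).IsPrime ∧
    RingHom.ker φ =
      Ideal.span { p : MvPolynomial (Fin n) K |
        ∃ u v : Fin n →₀ ℕ, (∑ i, u i • a i) = (∑ i, v i • a i) ∧
          p = monomial u (1 : K) - monomial v (1 : K) } := by
  refine ⟨RingHom.ker_isPrime φ, ?_⟩
  have hdeg (u : Fin n →₀ ℕ) : Finsupp.linearCombination ℕ a u = ∑ i, u i • a i :=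
    (Finsupp.linearCombination_apply ℕ u).trans (Finsupp.sum_fintype _ _ fun _ => zero_smul ℕ _)
  rw [hφ, aeval_monomial_one_eq_mapDomainAlgHom, AddMonoidAlgebra.ker_mapDomainAlgHom]
  simp only [LinearMap.toAddMonoidHom_coe, hdeg, single_eq_monomial]
end

section
/- (Shape of a zero-dimensional radical ideal in normal position) Let K be an algebraically closed field and I ⊆ K[x₁,…,xₙ] a radical zero-dimensional ideal, and suppose the finitely many points of the variety V(I) = { p ∈ Kⁿ : f(p) = 0 for all f ∈ I } have pairwise distinct last coordinates. Then there exist univariate polynomials g₁,…,g_{n−1} ∈ K[z] and a monic squarefree polynomial gₙ ∈ K[z] of degree equal to the number of points of V(I) such that I is generated by x₁ − g₁(xₙ), …, x_{n−1} − g_{n−1}(xₙ), gₙ(xₙ). -/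
open MvPolynomial

/-- The variety (set of common zeros in `Kⁿ`) of an ideal `I ⊆ K[x₁,…,xₙ]`. -/
def varietyOf {K : Type} [Field K] {N : ℕ} (I : Ideal (MvPolynomial (Fin N) K)) :
    Set (Fin N → K) :=
  { p | ∀ f ∈ I, MvPolynomial.eval p f = 0 }

/-! Modulo `I`, each variable satisfies a nonzero univariate polynomial, which confines every
coordinate of a point of `V(I)` to a finite set. When the last coordinates are distinct, Lagrange
interpolation gives `gᵢ` with `gᵢ(pₙ) = pᵢ` on `V(I)`, and `gₙ = ∏ₚ (z - pₙ)`. Substituting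
`xᵢ ↦ gᵢ(xₙ)` reduces any `f` modulo the proposed generators to a univariate `h(xₙ)`; if `f`
vanishes on `V(I)` then `h` vanishes at every `pₙ`, so `gₙ ∣ h`. By the Nullstellensatz the
radical ideal `I` is exactly the ideal of polynomials vanishing on `V(I)`. -/

namespace MvPolynomial

theorem aeval_polynomial_aeval_X {R S σ : Type*} [CommSemiring R] [CommSemiring S] [Algebra R S]
    (x : σ → S) (j : σ) (q : Polynomial R) :
    aeval x (Polynomial.aeval (X j : MvPolynomial σ R) q) = Polynomial.aeval (x j) q := by
  rw [← Polynomial.aeval_algHom_apply, aeval_X]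

theorem sub_mem_of_forall_X_sub_mem {R S σ : Type*} [CommRing R] [CommRing S] [Algebra R S]
    {J : Ideal S} {φ ψ : MvPolynomial σ R →ₐ[R] S} (h : ∀ j, φ (X j) - ψ (X j) ∈ J)
    (f : MvPolynomial σ R) : φ f - ψ f ∈ J := by
  have : (Ideal.Quotient.mkₐ R J).comp φ = (Ideal.Quotient.mkₐ R J).comp ψ :=
    algHom_ext fun j => Ideal.Quotient.eq.2 (h j)
  exact Ideal.Quotient.eq.1 (AlgHom.congr_fun this f)

theorem zeroLocus_finite {k K σ : Type*} [Field k] [Field K] [Algebra k K] [Finite σ]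
    (I : Ideal (MvPolynomial σ k)) [FiniteDimensional k (MvPolynomial σ k ⧸ I)] :
    (zeroLocus K I).Finite := by
  have hroot (i : σ) : ∃ q : Polynomial k, q ≠ 0 ∧ Polynomial.aeval (X i) q ∈ I := by
    obtain ⟨q, hq, hqX⟩ := IsIntegral.of_finite k (Ideal.Quotient.mk I (X i))
    refine ⟨q, hq.ne_zero, ?_⟩
    rwa [← Ideal.Quotient.eq_zero_iff_mem, ← Ideal.Quotient.mkₐ_eq_mk k,
      ← Polynomial.aeval_algHom_apply]
  choose q hq0 hqI using hroot
  refine (Set.Finite.pi fun i =>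
    Polynomial.finite_setOfPred_isRoot ((Polynomial.map_ne_zero_iff
      (algebraMap k K).injective).2 (hq0 i))).subset fun x hx i _ => ?_
  simpa [Polynomial.eval_map_algebraMap, aeval_polynomial_aeval_X] using hx _ (hqI i)

end MvPolynomial

namespace Lagrange

variable {F ι : Type*} [Field F] {s : Finset ι} {v : ι → F}

theorem squarefree_nodal (hvs : Set.InjOn v s) : Squarefree (nodal s v) :=
  (Polynomial.separable_prod_X_sub_C_iff'.2 fun _ hx _ hy h => hvs hx hy h).squarefree

theorem nodal_dvd_of_eval_eq_zero (hvs : Set.InjOn v s) {q : Polynomial F}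
    (hq : ∀ i ∈ s, q.eval (v i) = 0) : nodal s v ∣ q :=
  Finset.prod_dvd_of_coprime
    (fun _ hi _ hj hij => Polynomial.isCoprime_X_sub_C_of_isUnit_sub
      (sub_ne_zero.2 (hvs.ne hi hj hij)).isUnit)
    fun i hi => Polynomial.dvd_iff_isRoot.2 (hq i hi)

end Lagrange

section ShapeGenerators

variable {K : Type*} [Field K] {n : ℕ}

def shapeGenerators (g : Fin n → Polynomial K) (gn : Polynomial K) :
    Set (MvPolynomial (Fin (n + 1)) K) :=
  { p | ∃ i : Fin n,
      p = X i.castSucc -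
        Polynomial.aeval (R := K) (X (Fin.last n) : MvPolynomial (Fin (n + 1)) K) (g i) } ∪
    { Polynomial.aeval (R := K) (X (Fin.last n) : MvPolynomial (Fin (n + 1)) K) gn }

theorem shapeGenerators_subset_vanishingIdeal {S : Set (Fin (n + 1) → K)}
    {g : Fin n → Polynomial K} {gn : Polynomial K}
    (hg : ∀ i, ∀ p ∈ S, (g i).eval (p (Fin.last n)) = p i.castSucc)
    (hgn : ∀ p ∈ S, gn.eval (p (Fin.last n)) = 0) :
    shapeGenerators g gn ⊆ vanishingIdeal K S := by
  rintro f (⟨i, rfl⟩ | rfl) p hp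
  · rw [map_sub, aeval_X, aeval_polynomial_aeval_X, Polynomial.coe_aeval_eq_eval, hg i p hp,
      sub_self]
  · rw [aeval_polynomial_aeval_X, Polynomial.coe_aeval_eq_eval, hgn p hp]

theorem vanishingIdeal_le_span_shapeGenerators (S : Finset (Fin (n + 1) → K))
    (hS : Set.InjOn (fun p : Fin (n + 1) → K => p (Fin.last n)) S)
    {g : Fin n → Polynomial K} (hg : ∀ i, ∀ p ∈ S, (g i).eval (p (Fin.last n)) = p i.castSucc) :
    vanishingIdeal K (S : Set (Fin (n + 1) → K)) ≤
      Ideal.span (shapeGenerators g (Lagrange.nodal S (· (Fin.last n)))) := by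
  set J := Ideal.span (shapeGenerators g (Lagrange.nodal S (· (Fin.last n))))
  let A : Polynomial K →ₐ[K] MvPolynomial (Fin (n + 1)) K := Polynomial.aeval (X (Fin.last n))
  -- `φ` substitutes `xᵢ ↦ gᵢ(z)` and `xₙ ↦ z`
  let φ : MvPolynomial (Fin (n + 1)) K →ₐ[K] Polynomial K :=
    aeval (Fin.lastCases Polynomial.X g)
  have hφ_node (p) (hp : p ∈ S) (f : MvPolynomial (Fin (n + 1)) K) :
      (φ f).eval (p (Fin.last n)) = aeval p f := by
    rw [← Polynomial.coe_aeval_eq_eval, ← AlgHom.comp_apply, comp_aeval]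
    congr 2
    funext j
    induction j using Fin.lastCases with
    | last => simp
    | cast i => simp [hg i p hp]
  have hreduce (f) : f - A (φ f) ∈ J := by
    refine sub_mem_of_forall_X_sub_mem (φ := AlgHom.id K _) (ψ := A.comp φ) (fun j => ?_) f
    induction j using Fin.lastCases with
    | last => simp [φ, A]
    | cast i => exact Ideal.subset_span (Or.inl ⟨i, by simp [φ, A]⟩)
  intro f hf
  obtain ⟨h, hh⟩ := Lagrange.nodal_dvd_of_eval_eq_zero hS (q := φ f)
    fun p hp => (hφ_node p hp f).trans (hf p hp)
  have hgn : A (Lagrange.nodal S (· (Fin.last n))) ∈ J := Ideal.subset_span (Or.inr rfl)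
  simpa [hh] using J.add_mem (hreduce f) (J.mul_mem_right (A h) hgn)

theorem vanishingIdeal_eq_span_shapeGenerators (S : Finset (Fin (n + 1) → K))
    (hS : Set.InjOn (fun p : Fin (n + 1) → K => p (Fin.last n)) S)
    {g : Fin n → Polynomial K} (hg : ∀ i, ∀ p ∈ S, (g i).eval (p (Fin.last n)) = p i.castSucc) :
    vanishingIdeal K (S : Set (Fin (n + 1) → K)) =
      Ideal.span (shapeGenerators g (Lagrange.nodal S (· (Fin.last n)))) :=
  le_antisymm (vanishingIdeal_le_span_shapeGenerators S hS hg) <| Ideal.span_le.2 <|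
    shapeGenerators_subset_vanishingIdeal hg fun _ hp => Lagrange.eval_nodal_at_node (v := (· (Fin.last n))) hp

end ShapeGenerators

/-- shape of a zero-dimensional radical ideal in normal position: over an
algebraically closed field, a radical zero-dimensional ideal `I ⊆ K[x₁,…,x_{n+1}]` whose
(finitely many) zeros have pairwise distinct last coordinates is generated by
`x₁ − g₁(x_{n+1}), …, xₙ − gₙ(x_{n+1}), g_{n+1}(x_{n+1})`, where the `gᵢ` are univariate and
`g_{n+1}` is monic, squarefree, of degree equal to the number of points of `V(I)`. -/
theorem shape_lemma {K : Type} [Field K] [IsAlgClosed K] {n : ℕ}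
    (I : Ideal (MvPolynomial (Fin (n + 1)) K))
    (hrad : I.IsRadical)
    (hdim : FiniteDimensional K (MvPolynomial (Fin (n + 1)) K ⧸ I))
    (hinj : Set.InjOn (fun p : Fin (n + 1) → K => p (Fin.last n)) (varietyOf I)) :
    ∃ (g : Fin n → Polynomial K) (gn : Polynomial K),
      gn.Monic ∧ Squarefree gn ∧ gn.natDegree = (varietyOf I).ncard ∧
      I = Ideal.span
        ({ p | ∃ i : Fin n,
            p = X i.castSucc -
              Polynomial.aeval (R := K) (X (Fin.last n) : MvPolynomial (Fin (n + 1)) K) (g i) } ∪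
         { Polynomial.aeval (R := K) (X (Fin.last n) : MvPolynomial (Fin (n + 1)) K) gn }) := by
  classical
  have hfin : (zeroLocus K I).Finite := zeroLocus_finite I
  set S := hfin.toFinset
  have hS : Set.InjOn (fun p : Fin (n + 1) → K => p (Fin.last n)) S := by
    rwa [hfin.coe_toFinset]
  refine ⟨fun i => Lagrange.interpolate S (· (Fin.last n)) (· i.castSucc),
    Lagrange.nodal S (· (Fin.last n)), Lagrange.nodal_monic, Lagrange.squarefree_nodal hS,
    by rw [Lagrange.natDegree_nodal, ← Set.ncard_eq_toFinset_card _ hfin]; rfl, ?_⟩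
  calc I = vanishingIdeal K (zeroLocus K I) := by
        rw [vanishingIdeal_zeroLocus_eq_radical, hrad.radical]
    _ = vanishingIdeal K (S : Set (Fin (n + 1) → K)) := by rw [hfin.coe_toFinset]
    _ = _ := vanishingIdeal_eq_span_shapeGenerators S hS
        fun i _ hp => Lagrange.eval_interpolate_at_node _ hS hp
end
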